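/- Addition formula for theta functions: for Im(τ) > 0 and integers n₁ < n₂ < n₃, setting d₁ = n₂−n₁, d₂ = n₃−n₂, d₃ = n₃−n₁, and residues a mod d₁, b mod d₂, one has θ[a/d₁,0](d₁τ, d₁z₁)·θ[b/d₂,0](d₂τ, d₂z₂) = Σ_{m∈Z} exp(πiτ k_m²/(d₁d₂d₃) + 2πi (k_m/d₃)(z₂−z₁)) · θ[(a+b+d₂m)/d₃, 0](d₃τ, d₁z₁ + d₂z₂), where k_m = d₁b − d₂a + d₁d₂m. -/

import Mathlib

open Complex

/-- The theta function with characteristics,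
`θ[c',c''](τ,z) = Σ_{m∈ℤ} exp(2πi[τ(m+c')²/2 + (m+c')(z+c'')])`. -/
noncomputable def theta (c' c'' : ℝ) (τ z : ℂ) : ℂ :=
  ∑' m : ℤ, Complex.exp (2 * Real.pi * Complex.I *
    (τ * ((m : ℂ) + (c' : ℂ)) ^ 2 / 2 + ((m : ℂ) + (c' : ℂ)) * (z + (c'' : ℂ))))

/-- The general term of the theta series with characteristics. -/
noncomputable def thetaTerm (c' c'' : ℝ) (τ z : ℂ) (m : ℤ) : ℂ :=
  Complex.exp (2 * Real.pi * Complex.I *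
    (τ * ((m : ℂ) + (c' : ℂ)) ^ 2 / 2 + ((m : ℂ) + (c' : ℂ)) * (z + (c'' : ℂ))))

lemma thetaTerm_eq (c' c'' : ℝ) (τ z : ℂ) (m : ℤ) :
    thetaTerm c' c'' τ z m =
      Complex.exp ((Real.pi : ℂ) * Complex.I * τ * (c' : ℂ) ^ 2 +
          2 * Real.pi * Complex.I * (c' : ℂ) * (z + (c'' : ℂ))) *
        jacobiTheta₂_term m ((c' : ℂ) * τ + z + (c'' : ℂ)) τ := by
  rw [thetaTerm, jacobiTheta₂_term, ← Complex.exp_add]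
  congr 1
  ring

lemma summable_thetaTerm (c' c'' : ℝ) {τ : ℂ} (z : ℂ) (hτ : 0 < τ.im) :
    Summable (thetaTerm c' c'' τ z) := by
  rw [funext (thetaTerm_eq c' c'' τ z)]
  exact ((summable_jacobiTheta₂_term_iff _ τ).2 hτ).mul_left _

lemma summable_norm_thetaTerm (c' c'' : ℝ) {τ : ℂ} (z : ℂ) (hτ : 0 < τ.im) :
    Summable (fun m => ‖thetaTerm c' c'' τ z m‖) :=
  (summable_norm_iff (E := ℂ)).2 (summable_thetaTerm c' c'' z hτ)

lemma theta_eq_tsum (c' c'' : ℝ) (τ z : ℂ) :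
    theta c' c'' τ z = ∑' m : ℤ, thetaTerm c' c'' τ z m := rfl

set_option maxHeartbeats 1600000 in
/-- The polynomial identity of exponents underlying the theta addition formula. -/
lemma key_exponent (D₁ D₂ D₃ τ z₁ z₂ A B M N P : ℂ) (h1 : D₁ ≠ 0) (h2 : D₂ ≠ 0)
    (h3 : D₃ ≠ 0) (hd : D₃ = D₁ + D₂) :
    2 * P * (D₁ * τ * ((N : ℂ) + A / D₁) ^ 2 / 2 + ((N : ℂ) + A / D₁) * (D₁ * z₁ + 0)) +
      2 * P * (D₂ * τ * ((M + N : ℂ) + B / D₂) ^ 2 / 2 + ((M + N : ℂ) + B / D₂) * (D₂ * z₂ + 0)) =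
    (P * τ * (D₁ * B - D₂ * A + D₁ * D₂ * M) ^ 2 / (D₁ * D₂ * D₃) +
        2 * P * ((D₁ * B - D₂ * A + D₁ * D₂ * M) / D₃) * (z₂ - z₁)) +
      2 * P * (D₃ * τ * ((N : ℂ) + (A + B + D₂ * M) / D₃) ^ 2 / 2 +
        ((N : ℂ) + (A + B + D₂ * M) / D₃) * (D₁ * z₁ + D₂ * z₂ + 0)) := by
  have e1 : (N : ℂ) + A / D₁ = (D₁ * N + A) / D₁ := by field_simp
  have e2 : (M + N : ℂ) + B / D₂ = (D₂ * (M + N) + B) / D₂ := by field_simp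
  have e3 : (N : ℂ) + (A + B + D₂ * M) / D₃ = (D₃ * N + (A + B + D₂ * M)) / D₃ := by
    field_simp
  rw [e1, e2, e3, div_pow, div_pow, div_pow]
  subst hd
  field_simp
  ring

set_option maxHeartbeats 1600000 in
/-- Addition formula for theta functions: with `d₁ = n₂−n₁`, `d₂ = n₃−n₂`, `d₃ = n₃−n₁`
and `k_m = d₁b − d₂a + d₁d₂m`,
`θ[a/d₁,0](d₁τ, d₁z₁)·θ[b/d₂,0](d₂τ, d₂z₂)
  = Σ_m exp(πiτ k_m²/(d₁d₂d₃) + 2πi(k_m/d₃)(z₂−z₁))·θ[(a+b+d₂m)/d₃,0](d₃τ, d₁z₁+d₂z₂)`. -/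
theorem theta_addition_formula (τ : ℂ) (hτ : 0 < τ.im) (n₁ n₂ n₃ : ℤ)
    (h12 : n₁ < n₂) (h23 : n₂ < n₃) (d₁ d₂ d₃ : ℤ)
    (hd₁ : d₁ = n₂ - n₁) (hd₂ : d₂ = n₃ - n₂) (hd₃ : d₃ = n₃ - n₁)
    (a b : ℤ) (z₁ z₂ : ℂ) :
    theta ((a : ℝ) / (d₁ : ℝ)) 0 ((d₁ : ℂ) * τ) ((d₁ : ℂ) * z₁) *
      theta ((b : ℝ) / (d₂ : ℝ)) 0 ((d₂ : ℂ) * τ) ((d₂ : ℂ) * z₂) =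
    ∑' m : ℤ,
      Complex.exp ((Real.pi : ℂ) * Complex.I * τ *
            ((d₁ * b - d₂ * a + d₁ * d₂ * m : ℤ) : ℂ) ^ 2 /
            ((d₁ : ℂ) * (d₂ : ℂ) * (d₃ : ℂ)) +
          2 * Real.pi * Complex.I *
            (((d₁ * b - d₂ * a + d₁ * d₂ * m : ℤ) : ℂ) / (d₃ : ℂ)) * (z₂ - z₁)) *
        theta (((a + b + d₂ * m : ℤ) : ℝ) / (d₃ : ℝ)) 0 ((d₃ : ℂ) * τ)
          ((d₁ : ℂ) * z₁ + (d₂ : ℂ) * z₂) := by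
  have hd1 : (0:ℤ) < d₁ := by omega
  have hd2 : (0:ℤ) < d₂ := by omega
  have hd3' : d₃ = d₁ + d₂ := by omega
  have h1 : (d₁ : ℂ) ≠ 0 := by exact_mod_cast (by omega : d₁ ≠ 0)
  have h2 : (d₂ : ℂ) ≠ 0 := by exact_mod_cast (by omega : d₂ ≠ 0)
  have h3 : (d₃ : ℂ) ≠ 0 := by exact_mod_cast (by omega : d₃ ≠ 0)
  have hc3 : (d₃ : ℂ) = (d₁ : ℂ) + (d₂ : ℂ) := by exact_mod_cast congrArg (Int.cast : ℤ → ℂ) hd3'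
  have him : ∀ d : ℤ, 0 < d → 0 < ((d : ℂ) * τ).im := by
    intro d hd
    simp only [Complex.mul_im, Complex.intCast_re, Complex.intCast_im, zero_mul, add_zero]
    exact mul_pos (by exact_mod_cast hd) hτ
  set f : ℤ → ℂ := thetaTerm ((a : ℝ) / (d₁ : ℝ)) 0 ((d₁ : ℂ) * τ) ((d₁ : ℂ) * z₁) with hf
  set g : ℤ → ℂ := thetaTerm ((b : ℝ) / (d₂ : ℝ)) 0 ((d₂ : ℂ) * τ) ((d₂ : ℂ) * z₂) with hg
  set A : ℤ → ℂ := fun m => Complex.exp ((Real.pi : ℂ) * Complex.I * τ *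
            ((d₁ * b - d₂ * a + d₁ * d₂ * m : ℤ) : ℂ) ^ 2 /
            ((d₁ : ℂ) * (d₂ : ℂ) * (d₃ : ℂ)) +
          2 * Real.pi * Complex.I *
            (((d₁ * b - d₂ * a + d₁ * d₂ * m : ℤ) : ℂ) / (d₃ : ℂ)) * (z₂ - z₁)) with hA
  set t : ℤ → ℤ → ℂ := fun m => thetaTerm (((a + b + d₂ * m : ℤ) : ℝ) / (d₃ : ℝ)) 0
      ((d₃ : ℂ) * τ) ((d₁ : ℂ) * z₁ + (d₂ : ℂ) * z₂) with ht
  have hfn : Summable (fun m => ‖f m‖) := summable_norm_thetaTerm _ _ _ (him d₁ hd1)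
  have hgn : Summable (fun m => ‖g m‖) := summable_norm_thetaTerm _ _ _ (him d₂ hd2)
  have hF : Summable (fun pq : ℤ × ℤ => f pq.1 * g pq.2) :=
    summable_mul_of_summable_norm hfn hgn
  -- the re-indexing equivalence
  let e : ℤ × ℤ ≃ ℤ × ℤ :=
    ⟨fun mn => (mn.2, mn.1 + mn.2), fun pq => (pq.2 - pq.1, pq.1),
      fun mn => by simp, fun pq => by simp⟩
  -- key pointwise identity
  have key : ∀ mn : ℤ × ℤ, f (e mn).1 * g (e mn).2 = A mn.1 * t mn.1 mn.2 := by
    rintro ⟨m, n⟩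
    simp only [hf, hg, hA, ht, thetaTerm, e, Equiv.coe_fn_mk]
    rw [← Complex.exp_add, ← Complex.exp_add]
    congr 1
    have hk := key_exponent (d₁ : ℂ) (d₂ : ℂ) (d₃ : ℂ) τ z₁ z₂ (a : ℂ) (b : ℂ) (m : ℂ) (n : ℂ)
      ((Real.pi : ℂ) * Complex.I) h1 h2 h3 hc3
    push_cast
    push_cast at hk
    linear_combination hk
  have hG : Summable (fun mn : ℤ × ℤ => A mn.1 * t mn.1 mn.2) := by
    have h' := (e.summable_iff (f := fun pq : ℤ × ℤ => f pq.1 * g pq.2)).2 hF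
    exact h'.congr fun mn => key mn
  calc
    (∑' p, f p) * ∑' q, g q = ∑' pq : ℤ × ℤ, f pq.1 * g pq.2 :=
      tsum_mul_tsum_of_summable_norm hfn hgn
    _ = ∑' mn : ℤ × ℤ, f (e mn).1 * g (e mn).2 := (e.tsum_eq _).symm
    _ = ∑' mn : ℤ × ℤ, A mn.1 * t mn.1 mn.2 := tsum_congr key
    _ = ∑' m, ∑' n, A m * t m n := hG.tsum_prod
    _ = ∑' m, A m * ∑' n, t m n := tsum_congr fun m => tsum_mul_left
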